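/- arXiv:1607.04736 — 4 statements merged into one kernel-verified Lean document; each statement's English description precedes it below -/
import Mathlib

section
/- The function h(w) = w·e^{w²/2}·Φ(w) is strictly increasing on all of ℝ, where Φ is the standard normal cumulative distribution function. -/
/-!
Write `φ` for the standard normal density, so that `Φ' = φ` and `φ'(x) = -x φ(x)`. Then
`h'(w) = e^{w²/2} g(w)` with `g(w) = (1 + w²) Φ(w) + w φ(w)`, and `g' = 2k` with
`k(w) = w Φ(w) + φ(w)`, whose derivative is `Φ > 0`. Both `k` and `g` tend to `0` at `-∞`
because `Φ(x) = O(e^{-x²/4})` there, so the increasing function `k` is positive, hence so is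
the increasing function `g`, hence `h' > 0`.
-/

open Real MeasureTheory Filter Topology Set

/-- The standard normal cumulative distribution function. -/
noncomputable def stdNormalCDF (w : ℝ) : ℝ :=
  ∫ x in Set.Iic w, (Real.sqrt (2 * Real.pi))⁻¹ * Real.exp (-x ^ 2 / 2)

theorem hasDerivAt_integral_Iic {E : Type*} [NormedAddCommGroup E] [NormedSpace ℝ E]
    [CompleteSpace E] {f : ℝ → E} (hf : Continuous f) (hfi : Integrable f) (w : ℝ) :
    HasDerivAt (fun u => ∫ x in Iic u, f x) (f w) w := by
  have hsplit : (fun u => ∫ x in Iic u, f x) =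
      fun u => (∫ x in Iic 0, f x) + ∫ x in (0 : ℝ)..u, f x := by
    funext u
    rw [← intervalIntegral.integral_Iic_sub_Iic hfi.integrableOn hfi.integrableOn,
      add_sub_cancel]
  rw [hsplit]
  exact (hf.integral_hasStrictDerivAt 0 w).hasDerivAt.const_add _

theorem StrictMono.lt_of_tendsto_atBot {α β : Type*} [TopologicalSpace α] [Preorder α]
    [OrderClosedTopology α] [PartialOrder β] [IsCodirectedOrder β] [NoMinOrder β]
    {f : β → α} {a : α} (hf : StrictMono f) (ha : Tendsto f atBot (𝓝 a)) (b : β) : a < f b := by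
  obtain ⟨c, hcb⟩ := exists_lt b
  exact (hf.monotone.le_of_tendsto ha c).trans_lt (hf hcb)

theorem pos_of_hasDerivAt_pos_of_tendsto_atBot {f f' : ℝ → ℝ} (hf : ∀ x, HasDerivAt f (f' x) x)
    (hf' : ∀ x, 0 < f' x) (hlim : Tendsto f atBot (𝓝 0)) (x : ℝ) : 0 < f x :=
  (strictMono_of_deriv_pos fun y => (hf y).deriv ▸ hf' y).lt_of_tendsto_atBot hlim x

theorem tendsto_abs_pow_mul_exp_neg_mul_sq_atBot {a : ℝ} (ha : 0 < a) (n : ℕ) :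
    Tendsto (fun x : ℝ => |x| ^ n * exp (-a * x ^ 2)) atBot (𝓝 0) := by
  simpa only [rpow_natCast] using
    (tendsto_rpow_abs_mul_exp_neg_mul_sq_cocompact ha n).mono_left atBot_le_cocompact

noncomputable def stdNormalPDF (x : ℝ) : ℝ := (√(2 * π))⁻¹ * exp (-x ^ 2 / 2)

theorem stdNormalPDF_pos (x : ℝ) : 0 < stdNormalPDF x := by
  unfold stdNormalPDF; positivity

theorem continuous_stdNormalPDF : Continuous stdNormalPDF := by
  unfold stdNormalPDF; fun_prop

theorem integrable_stdNormalPDF : Integrable stdNormalPDF := by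
  refine ((integrable_exp_neg_mul_sq (b := 1 / 2) (by norm_num)).const_mul (√(2 * π))⁻¹).congr
    (.of_forall fun x => ?_)
  simp only [stdNormalPDF]; ring_nf

theorem hasDerivAt_stdNormalPDF (x : ℝ) : HasDerivAt stdNormalPDF (-x * stdNormalPDF x) x := by
  have h : HasDerivAt (fun y : ℝ => -y ^ 2 / 2) (-x) x :=
    ((hasDerivAt_pow 2 x).neg.div_const 2).congr_deriv (by push_cast; ring)
  exact (h.exp.const_mul _).congr_deriv (by simp only [stdNormalPDF]; ring)

theorem stdNormalCDF_eq_integral_stdNormalPDF (w : ℝ) :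
    stdNormalCDF w = ∫ x in Iic w, stdNormalPDF x := rfl

theorem stdNormalCDF_pos (w : ℝ) : 0 < stdNormalCDF w := by
  rw [stdNormalCDF_eq_integral_stdNormalPDF, setIntegral_pos_iff_support_of_nonneg_ae
    (.of_forall fun x => (stdNormalPDF_pos x).le) integrable_stdNormalPDF.integrableOn,
    Function.support_eq_univ fun x => (stdNormalPDF_pos x).ne', univ_inter, volume_Iic]
  exact ENNReal.zero_lt_top

theorem hasDerivAt_stdNormalCDF (w : ℝ) : HasDerivAt stdNormalCDF (stdNormalPDF w) w :=
  hasDerivAt_integral_Iic continuous_stdNormalPDF integrable_stdNormalPDF w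

theorem exists_stdNormalCDF_le :
    ∃ C, ∀ x ≤ 0, stdNormalCDF x ≤ C * exp (-(1 / 4) * x ^ 2) := by
  set g : ℝ → ℝ := fun y => (√(2 * π))⁻¹ * exp (-(1 / 4) * y ^ 2)
  have hg : Integrable g := (integrable_exp_neg_mul_sq (by norm_num)).const_mul _
  refine ⟨∫ y, g y, fun x hx => ?_⟩
  -- For `y ≤ x ≤ 0` we have `x² ≤ y²`, so `e^{-y²/2} ≤ e^{-y²/4} e^{-x²/4}`.
  calc stdNormalCDF x ≤ ∫ y in Iic x, g y * exp (-(1 / 4) * x ^ 2) := by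
        refine setIntegral_mono_on integrable_stdNormalPDF.integrableOn
          (hg.mul_const _).integrableOn measurableSet_Iic fun y hy => ?_
        have hxy : x ^ 2 ≤ y ^ 2 := by nlinarith [mem_Iic.1 hy]
        simp only [g, mul_assoc, ← exp_add]
        gcongr
        linarith
    _ ≤ ∫ y, g y * exp (-(1 / 4) * x ^ 2) :=
        setIntegral_le_integral (hg.mul_const _) (.of_forall fun y => by positivity)
    _ = (∫ y, g y) * exp (-(1 / 4) * x ^ 2) := integral_mul_const _ _

theorem tendsto_pow_mul_stdNormalPDF_atBot (n : ℕ) :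
    Tendsto (fun x => x ^ n * stdNormalPDF x) atBot (𝓝 0) := by
  refine squeeze_zero_norm (fun x => le_of_eq ?_)
    ((tendsto_abs_pow_mul_exp_neg_mul_sq_atBot (a := 1 / 2) (by norm_num) n).const_mul
      (√(2 * π))⁻¹ |>.trans (by rw [mul_zero]))
  rw [norm_mul, norm_pow, Real.norm_eq_abs, Real.norm_of_nonneg (stdNormalPDF_pos x).le,
    stdNormalPDF]
  ring_nf

theorem tendsto_pow_mul_stdNormalCDF_atBot (n : ℕ) :
    Tendsto (fun x => x ^ n * stdNormalCDF x) atBot (𝓝 0) := by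
  obtain ⟨C, hC⟩ := exists_stdNormalCDF_le
  refine squeeze_zero_norm' ?_ (by simpa only [mul_zero] using
    (tendsto_abs_pow_mul_exp_neg_mul_sq_atBot (a := 1 / 4) (by norm_num) n).const_mul C)
  filter_upwards [eventually_le_atBot 0] with x hx
  rw [norm_mul, norm_pow, Real.norm_eq_abs, Real.norm_of_nonneg (stdNormalCDF_pos x).le,
    mul_left_comm]
  exact mul_le_mul_of_nonneg_left (hC x hx) (by positivity)

theorem mul_stdNormalCDF_add_stdNormalPDF_pos (x : ℝ) :
    0 < x * stdNormalCDF x + stdNormalPDF x := by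
  refine pos_of_hasDerivAt_pos_of_tendsto_atBot
    (f := fun y => y * stdNormalCDF y + stdNormalPDF y) (fun y => ?_) stdNormalCDF_pos ?_ x
  · exact (((hasDerivAt_id' y).mul (hasDerivAt_stdNormalCDF y)).add
      (hasDerivAt_stdNormalPDF y)).congr_deriv (by ring)
  · simpa using (tendsto_pow_mul_stdNormalCDF_atBot 1).add (tendsto_pow_mul_stdNormalPDF_atBot 0)

theorem one_add_sq_mul_stdNormalCDF_add_mul_stdNormalPDF_pos (x : ℝ) :
    0 < (1 + x ^ 2) * stdNormalCDF x + x * stdNormalPDF x := by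
  refine pos_of_hasDerivAt_pos_of_tendsto_atBot
    (f := fun y => (1 + y ^ 2) * stdNormalCDF y + y * stdNormalPDF y) (fun y => ?_)
    (fun y => mul_pos two_pos (mul_stdNormalCDF_add_stdNormalPDF_pos y)) ?_ x
  · exact ((((hasDerivAt_pow 2 y).const_add 1).mul (hasDerivAt_stdNormalCDF y)).add
      ((hasDerivAt_id' y).mul (hasDerivAt_stdNormalPDF y))).congr_deriv (by push_cast; ring)
  · have h := ((tendsto_pow_mul_stdNormalCDF_atBot 0).add
      (tendsto_pow_mul_stdNormalCDF_atBot 2)).add (tendsto_pow_mul_stdNormalPDF_atBot 1)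
    simp only [add_zero] at h
    exact h.congr fun y => by ring

theorem stmt0 :
    StrictMono (fun w : ℝ => w * Real.exp (w ^ 2 / 2) * stdNormalCDF w) := by
  refine strictMono_of_deriv_pos fun w => ?_
  have hderiv : HasDerivAt (fun w : ℝ => w * exp (w ^ 2 / 2) * stdNormalCDF w)
      (exp (w ^ 2 / 2) * ((1 + w ^ 2) * stdNormalCDF w + w * stdNormalPDF w)) w :=
    (((hasDerivAt_id' w).mul ((hasDerivAt_pow 2 w).div_const 2).exp).mul
      (hasDerivAt_stdNormalCDF w)).congr_deriv (by simp only [Pi.mul_apply]; push_cast; ring)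
  rw [hderiv.deriv]
  exact mul_pos (exp_pos _) (one_add_sq_mul_stdNormalCDF_add_mul_stdNormalPDF_pos w)
end

section
/- For the copula C_θ defined by C_θ(u,v) = u if 0 ≤ u ≤ θv, C_θ(u,v) = θv if θv < u < 1−(1−θ)v, and C_θ(u,v) = u+v−1 if 1−(1−θ)v ≤ u ≤ 1, with parameter θ ∈ (0,1): the diagonal tail dependence coefficient lim_{u↓0} C_θ(u,u)/u equals θ, while the limit along the path (u√θ, u/√θ), namely lim_{u↓0} C_θ(u√θ, u/√θ)/u, equals √θ, which is strictly greater than θ. -/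
/-- The singular copula of Nelsen's Example 3.3. -/
noncomputable def Cθ (θ u v : ℝ) : ℝ :=
  if u ≤ θ * v then u
  else if u < 1 - (1 - θ) * v then θ * v
  else u + v - 1

theorem stmt9 (θ : ℝ) (hθ : θ ∈ Set.Ioo (0 : ℝ) 1) :
    Filter.Tendsto (fun u => Cθ θ u u / u) (nhdsWithin 0 (Set.Ioi 0)) (nhds θ) ∧
    Filter.Tendsto (fun u => Cθ θ (u * Real.sqrt θ) (u / Real.sqrt θ) / u)
      (nhdsWithin 0 (Set.Ioi 0)) (nhds (Real.sqrt θ)) ∧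
    θ < Real.sqrt θ := by
  obtain ⟨hθ0, hθ1⟩ := hθ
  have hs : (0:ℝ) < Real.sqrt θ := Real.sqrt_pos.mpr hθ0
  have hss : Real.sqrt θ * Real.sqrt θ = θ := Real.mul_self_sqrt hθ0.le
  refine ⟨?_, ?_, ?_⟩
  · have h2 : (0:ℝ) < 1/(2-θ) := by apply div_pos one_pos; linarith
    have hev : ∀ᶠ u in nhdsWithin 0 (Set.Ioi 0), Cθ θ u u / u = θ := by
      filter_upwards [Ioo_mem_nhdsGT_of_mem (⟨le_rfl, h2⟩ : (0:ℝ) ∈ Set.Ico 0 (1/(2-θ)))] with u hu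
      obtain ⟨hu0, hu1⟩ := hu
      have h1 : ¬ u ≤ θ * u := by nlinarith
      have h3 : u < 1 - (1 - θ) * u := by
        have : u * (2 - θ) < 1 := (lt_div_iff₀ (by linarith)).mp hu1
        nlinarith
      simp only [Cθ, if_neg h1, if_pos h3]
      field_simp
    exact Filter.Tendsto.congr' (hev.mono fun u h => h.symm) tendsto_const_nhds
  · have hev : ∀ᶠ u in nhdsWithin 0 (Set.Ioi 0),
        Cθ θ (u * Real.sqrt θ) (u / Real.sqrt θ) / u = Real.sqrt θ := by
      filter_upwards [self_mem_nhdsWithin] with u hu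
      have hu0 : (0:ℝ) < u := hu
      have heq : θ * (u / Real.sqrt θ) = u * Real.sqrt θ := by
        field_simp; nlinarith
      simp only [Cθ, heq, if_pos le_rfl]
      field_simp
    exact Filter.Tendsto.congr' (hev.mono fun u h => h.symm) tendsto_const_nhds
  · nlinarith [Real.sq_sqrt hθ0.le, Real.sqrt_nonneg θ]
end

section
/- If ρ ∈ (0,1), then the bivariate Gaussian copula satisfies C_ρ(u,v) > uv for all u, v ∈ (0,1), where C_ρ(u,v) = Φ₂(Φ^{-1}(u), Φ^{-1}(v); ρ). -/
/-- The bivariate standard normal distribution function with correlation ρ. -/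
noncomputable def biNormalCDF (ρ s t : ℝ) : ℝ :=
  ∫ x in Set.Iic s, ∫ y in Set.Iic t,
    (2 * Real.pi * Real.sqrt (1 - ρ ^ 2))⁻¹ *
      Real.exp (-(x ^ 2 - 2 * ρ * x * y + y ^ 2) / (2 * (1 - ρ ^ 2)))

open MeasureTheory Real Set


noncomputable def phi (x : ℝ) : ℝ := (Real.sqrt (2 * Real.pi))⁻¹ * Real.exp (-x ^ 2 / 2)

lemma phi_pos (x : ℝ) : 0 < phi x := by
  apply mul_pos (inv_pos.2 (Real.sqrt_pos.2 (by positivity))) (Real.exp_pos _)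

lemma sqrt_two_pi_pos : 0 < Real.sqrt (2 * Real.pi) := Real.sqrt_pos.2 (by positivity)

lemma integrable_gauss : Integrable (fun x : ℝ => Real.exp (-x ^ 2 / 2)) := by
  have := integrable_exp_neg_mul_sq (b := 1/2) (by norm_num)
  convert this using 2 with x
  ring_nf

lemma integrable_phi : Integrable phi := by
  exact integrable_gauss.const_mul (Real.sqrt (2 * Real.pi))⁻¹

lemma integral_gauss : ∫ x : ℝ, Real.exp (-x ^ 2 / 2) = Real.sqrt (2 * Real.pi) := by
  have := integral_gaussian (1/2)
  rw [show Real.pi / (1/2) = 2 * Real.pi by ring] at this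
  rw [← this]
  congr 1 with x
  ring_nf

lemma integral_phi : ∫ x : ℝ, phi x = 1 := by
  rw [show (fun x : ℝ => phi x) = fun x => (Real.sqrt (2*Real.pi))⁻¹ * Real.exp (-x^2/2) from rfl,
    integral_const_mul, integral_gauss, inv_mul_cancel₀ sqrt_two_pi_pos.ne']

lemma stdNormalCDF_eq (w : ℝ) : stdNormalCDF w = ∫ x in Set.Iic w, phi x := rfl

lemma stdNormalCDF_nonneg (w : ℝ) : 0 ≤ stdNormalCDF w := by
  rw [stdNormalCDF_eq]
  exact setIntegral_nonneg measurableSet_Iic fun x _ => (phi_pos x).le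

lemma stdNormalCDF_le_one (w : ℝ) : stdNormalCDF w ≤ 1 := by
  rw [stdNormalCDF_eq, ← integral_phi]
  exact setIntegral_le_integral integrable_phi (Filter.Eventually.of_forall fun x => (phi_pos x).le)

lemma stdNormalCDF_strictMono : StrictMono stdNormalCDF := by
  intro a b hab
  rw [← sub_pos, stdNormalCDF_eq, stdNormalCDF_eq,
    intervalIntegral.integral_Iic_sub_Iic integrable_phi.integrableOn integrable_phi.integrableOn]
  exact intervalIntegral.intervalIntegral_pos_of_pos_on
    integrable_phi.intervalIntegrable (fun x _ => phi_pos x) hab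

/-- Affine change of variables for Gaussian half-line integrals. -/
lemma gauss_affine_Iic (a c t : ℝ) (hc : 0 < c) :
    ∫ y in Set.Iic t, Real.exp (-(y - a) ^ 2 / (2 * c ^ 2)) =
      c * Real.sqrt (2 * Real.pi) * stdNormalCDF ((t - a) / c) := by
  set f : ℝ → ℝ := (Set.Iic t).indicator (fun y => Real.exp (-(y - a) ^ 2 / (2 * c ^ 2))) with hf
  have h1 : ∫ y in Set.Iic t, Real.exp (-(y - a) ^ 2 / (2 * c ^ 2)) = ∫ y, f y := by
    rw [hf, integral_indicator measurableSet_Iic]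
  have key : ∀ z : ℝ, f (c * z + a)
      = (Set.Iic ((t - a) / c)).indicator (fun z => Real.exp (-z ^ 2 / 2)) z := by
    intro z
    by_cases h : z ≤ (t - a) / c
    · have h' : c * z + a ≤ t := by
        have := (le_div_iff₀ hc).mp h; nlinarith
      rw [hf, Set.indicator_of_mem (show c * z + a ∈ Set.Iic t from h'),
        Set.indicator_of_mem (show z ∈ Set.Iic ((t - a) / c) from h)]
      congr 1
      field_simp
      ring
    · have h' : ¬ (c * z + a ≤ t) := by
        rw [not_le] at h ⊢
        have := (div_lt_iff₀ hc).mp h; nlinarith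
      rw [hf, Set.indicator_of_notMem (show c * z + a ∉ Set.Iic t from h'),
        Set.indicator_of_notMem (show z ∉ Set.Iic ((t - a) / c) from h)]
  have h2 := Measure.integral_comp_mul_left (fun w : ℝ => f (w + a)) c
  have h3 := integral_add_right_eq_self (μ := volume) f a
  rw [h3] at h2
  -- h2 : ∫ z, f (c * z + a) = |c⁻¹| • ∫ y, f y
  have h4 : ∫ z : ℝ, f (c * z + a) =
      ∫ z in Set.Iic ((t - a) / c), Real.exp (-z ^ 2 / 2) := by
    rw [← integral_indicator measurableSet_Iic]
    exact integral_congr_ae (Filter.Eventually.of_forall key)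
  rw [h4] at h2
  have h5 : ∫ z in Set.Iic ((t - a) / c), Real.exp (-z ^ 2 / 2)
      = Real.sqrt (2 * Real.pi) * stdNormalCDF ((t - a) / c) := by
    rw [stdNormalCDF]
    rw [← integral_const_mul]
    congr 1 with x
    rw [← mul_assoc, mul_inv_cancel₀ (Real.sqrt_pos.2 (by positivity)).ne', one_mul]
  rw [h5, abs_of_pos (inv_pos.2 hc), smul_eq_mul] at h2
  rw [h1]
  rw [show ∫ y, f y = c * (c⁻¹ * ∫ y, f y) by field_simp, ← h2]
  ring

lemma gauss_affine_full (a c : ℝ) (hc : 0 < c) :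
    ∫ y : ℝ, Real.exp (-(y - a) ^ 2 / (2 * c ^ 2)) = c * Real.sqrt (2 * Real.pi) := by
  set f : ℝ → ℝ := fun y => Real.exp (-(y - a) ^ 2 / (2 * c ^ 2)) with hf
  have key : ∀ z : ℝ, f (c * z + a) = Real.exp (-z ^ 2 / 2) := by
    intro z
    show Real.exp (-(c * z + a - a) ^ 2 / (2 * c ^ 2)) = Real.exp (-z ^ 2 / 2)
    congr 1
    have : c ^ 2 ≠ 0 := by positivity
    field_simp
    ring
  have h2 := Measure.integral_comp_mul_left (fun w : ℝ => f (w + a)) c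
  have h3 := integral_add_right_eq_self (μ := volume) f a
  rw [h3] at h2
  have h4 : ∫ z : ℝ, f (c * z + a) = Real.sqrt (2 * Real.pi) := by
    rw [← integral_gauss]
    exact integral_congr_ae (Filter.Eventually.of_forall key)
  rw [h4, abs_of_pos (inv_pos.2 hc), smul_eq_mul] at h2
  rw [show ∫ y, f y = c * (c⁻¹ * ∫ y, f y) by field_simp, ← h2]

/-- The bivariate normal density appearing in biNormalCDF. -/
noncomputable def f2 (ρ x y : ℝ) : ℝ :=
  (2 * Real.pi * Real.sqrt (1 - ρ ^ 2))⁻¹ *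
    Real.exp (-(x ^ 2 - 2 * ρ * x * y + y ^ 2) / (2 * (1 - ρ ^ 2)))

lemma one_sub_sq_pos {ρ : ℝ} (hρ : ρ ∈ Set.Ioo (0:ℝ) 1) : 0 < 1 - ρ ^ 2 := by
  obtain ⟨h1, h2⟩ := hρ; nlinarith

lemma sigma_pos {ρ : ℝ} (hρ : ρ ∈ Set.Ioo (0:ℝ) 1) : 0 < Real.sqrt (1 - ρ ^ 2) :=
  Real.sqrt_pos.2 (one_sub_sq_pos hρ)

lemma sigma_sq {ρ : ℝ} (hρ : ρ ∈ Set.Ioo (0:ℝ) 1) :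
    Real.sqrt (1 - ρ ^ 2) ^ 2 = 1 - ρ ^ 2 :=
  Real.sq_sqrt (one_sub_sq_pos hρ).le

lemma const_split {σ : ℝ} (hσ : 0 < σ) :
    (2 * Real.pi * σ)⁻¹ = (Real.sqrt (2 * Real.pi))⁻¹ * (Real.sqrt (2 * Real.pi) * σ)⁻¹ := by
  have h : Real.sqrt (2 * Real.pi) * Real.sqrt (2 * Real.pi) = 2 * Real.pi :=
    Real.mul_self_sqrt (by positivity)
  rw [← mul_inv, ← mul_assoc, h]

lemma f2_factor1 {ρ : ℝ} (hρ : ρ ∈ Set.Ioo (0:ℝ) 1) (x y : ℝ) :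
    f2 ρ x y = phi x * ((Real.sqrt (2 * Real.pi) * Real.sqrt (1 - ρ ^ 2))⁻¹ *
      Real.exp (-(y - ρ * x) ^ 2 / (2 * Real.sqrt (1 - ρ ^ 2) ^ 2))) := by
  have hσ2 : Real.sqrt (1 - ρ ^ 2) ^ 2 = 1 - ρ ^ 2 := sigma_sq hρ
  have h1 : (1:ℝ) - ρ ^ 2 ≠ 0 := (one_sub_sq_pos hρ).ne'
  rw [f2, phi, hσ2]
  rw [show -(x ^ 2 - 2 * ρ * x * y + y ^ 2) / (2 * (1 - ρ ^ 2)) =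
      -x ^ 2 / 2 + -(y - ρ * x) ^ 2 / (2 * (1 - ρ ^ 2)) by field_simp; ring, Real.exp_add,
    const_split (sigma_pos hρ)]
  ring

lemma f2_factor2 {ρ : ℝ} (hρ : ρ ∈ Set.Ioo (0:ℝ) 1) (x y : ℝ) :
    f2 ρ x y = phi y * ((Real.sqrt (2 * Real.pi) * Real.sqrt (1 - ρ ^ 2))⁻¹ *
      Real.exp (-(x - ρ * y) ^ 2 / (2 * Real.sqrt (1 - ρ ^ 2) ^ 2))) := by
  rw [show f2 ρ x y = f2 ρ y x by rw [f2, f2]; ring_nf]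
  exact f2_factor1 hρ y x

lemma f2_nonneg {ρ : ℝ} (hρ : ρ ∈ Set.Ioo (0:ℝ) 1) (x y : ℝ) : 0 ≤ f2 ρ x y := by
  have := sigma_pos hρ
  unfold f2
  positivity

/-- Lemma A: inner integral. -/
lemma inner_int {ρ : ℝ} (hρ : ρ ∈ Set.Ioo (0:ℝ) 1) (x t : ℝ) :
    ∫ y in Set.Iic t, f2 ρ x y =
      phi x * stdNormalCDF ((t - ρ * x) / Real.sqrt (1 - ρ ^ 2)) := by
  set σ := Real.sqrt (1 - ρ ^ 2) with hσ
  have hσpos : 0 < σ := sigma_pos hρ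
  have h1 : ∀ y, f2 ρ x y = phi x * ((Real.sqrt (2 * Real.pi) * σ)⁻¹ *
      Real.exp (-(y - ρ * x) ^ 2 / (2 * σ ^ 2))) := fun y => f2_factor1 hρ x y
  rw [setIntegral_congr_fun measurableSet_Iic (fun y _ => h1 y)]
  rw [integral_const_mul, integral_const_mul, gauss_affine_Iic (ρ * x) σ t hσpos]
  have : (Real.sqrt (2 * Real.pi) * σ)⁻¹ * (σ * Real.sqrt (2 * Real.pi) *
      stdNormalCDF ((t - ρ * x) / σ)) = stdNormalCDF ((t - ρ * x) / σ) := by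
    have h2 : Real.sqrt (2 * Real.pi) * σ ≠ 0 := by positivity
    field_simp
  rw [this]

/-- Lemma A': full-line integral in the first variable. -/
lemma full_int {ρ : ℝ} (hρ : ρ ∈ Set.Ioo (0:ℝ) 1) (y : ℝ) :
    ∫ x : ℝ, f2 ρ x y = phi y := by
  set σ := Real.sqrt (1 - ρ ^ 2) with hσ
  have hσpos : 0 < σ := sigma_pos hρ
  have h1 : ∀ x, f2 ρ x y = phi y * ((Real.sqrt (2 * Real.pi) * σ)⁻¹ *
      Real.exp (-(x - ρ * y) ^ 2 / (2 * σ ^ 2))) := fun x => f2_factor2 hρ x y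
  rw [integral_congr_ae (Filter.Eventually.of_forall h1)]
  rw [integral_const_mul, integral_const_mul, gauss_affine_full (ρ * y) σ hσpos]
  have h2 : Real.sqrt (2 * Real.pi) * σ ≠ 0 := by positivity
  have h3 : (Real.sqrt (2 * Real.pi) * σ)⁻¹ * (σ * Real.sqrt (2 * Real.pi)) = 1 := by
    rw [mul_comm σ]; exact inv_mul_cancel₀ h2
  rw [h3, mul_one]

lemma continuous_f2 (ρ : ℝ) : Continuous (fun p : ℝ × ℝ => f2 ρ p.1 p.2) := by
  unfold f2
  fun_prop

lemma f2_le {ρ : ℝ} (hρ : ρ ∈ Set.Ioo (0:ℝ) 1) (x y : ℝ) :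
    f2 ρ x y ≤ (2 * Real.pi * Real.sqrt (1 - ρ ^ 2))⁻¹ *
      (Real.exp (-(1/(2*(1+ρ))) * x ^ 2) * Real.exp (-(1/(2*(1+ρ))) * y ^ 2)) := by
  obtain ⟨hρ1, hρ2⟩ := hρ
  have hσ : 0 < Real.sqrt (1 - ρ ^ 2) := sigma_pos ⟨hρ1, hρ2⟩
  unfold f2
  rw [← Real.exp_add]
  apply mul_le_mul_of_nonneg_left _ (by positivity)
  apply Real.exp_le_exp.2
  have h1 : 0 < 1 - ρ ^ 2 := by nlinarith
  have h2 : 0 < 1 + ρ := by linarith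
  have hsum : -(1/(2*(1+ρ))) * x ^ 2 + -(1/(2*(1+ρ))) * y ^ 2
      = -(x ^ 2 + y ^ 2) / (2*(1+ρ)) := by ring
  rw [hsum, div_le_div_iff₀ (by nlinarith) (by linarith)]
  nlinarith [mul_nonneg (mul_nonneg (show (0:ℝ) ≤ 2*(1+ρ) by linarith) hρ1.le)
    (sq_nonneg (x - y))]
lemma integrable_f2 {ρ : ℝ} (hρ : ρ ∈ Set.Ioo (0:ℝ) 1) :
    Integrable (fun p : ℝ × ℝ => f2 ρ p.1 p.2) ((volume : Measure ℝ).prod volume) := by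
  have hb : (0:ℝ) < 1/(2*(1+ρ)) := by
    obtain ⟨h1, h2⟩ := hρ; positivity
  have hg : Integrable (fun p : ℝ × ℝ =>
      Real.exp (-(1/(2*(1+ρ))) * p.1 ^ 2) * Real.exp (-(1/(2*(1+ρ))) * p.2 ^ 2))
      ((volume : Measure ℝ).prod volume) :=
    (integrable_exp_neg_mul_sq hb).mul_prod (integrable_exp_neg_mul_sq hb)
  refine (hg.const_mul ((2 * Real.pi * Real.sqrt (1 - ρ ^ 2))⁻¹)).mono
    (continuous_f2 ρ).aestronglyMeasurable ?_
  refine Filter.Eventually.of_forall fun p => ?_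
  rw [Real.norm_eq_abs, Real.norm_eq_abs, abs_of_nonneg (f2_nonneg hρ p.1 p.2)]
  refine le_trans (f2_le hρ p.1 p.2) (le_abs_self _)

/-- Fubini: the marginal identity. -/
lemma fubini_marg {ρ : ℝ} (hρ : ρ ∈ Set.Ioo (0:ℝ) 1) (t : ℝ) :
    ∫ x : ℝ, phi x * stdNormalCDF ((t - ρ * x) / Real.sqrt (1 - ρ ^ 2)) =
      stdNormalCDF t := by
  have h1 : ∀ x : ℝ, phi x * stdNormalCDF ((t - ρ * x) / Real.sqrt (1 - ρ ^ 2)) =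
      ∫ y in Set.Iic t, f2 ρ x y := fun x => (inner_int hρ x t).symm
  rw [integral_congr_ae (Filter.Eventually.of_forall h1)]
  have h2 : ∀ x : ℝ, ∫ y in Set.Iic t, f2 ρ x y =
      ∫ y, (Set.Iic t).indicator (f2 ρ x) y :=
    fun x => (integral_indicator measurableSet_Iic).symm
  rw [integral_congr_ae (Filter.Eventually.of_forall h2)]
  have hint : Integrable (Function.uncurry fun x y => (Set.Iic t).indicator (f2 ρ x) y)
      ((volume : Measure ℝ).prod volume) := by
    refine (integrable_f2 hρ).mono ?_ ?_
    · have : (Function.uncurry fun x y => (Set.Iic t).indicator (f2 ρ x) y) =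
          (Set.univ ×ˢ Set.Iic t).indicator (fun p : ℝ × ℝ => f2 ρ p.1 p.2) := by
        ext p
        by_cases h : p.2 ∈ Set.Iic t
        · simp [Function.uncurry, Set.indicator_of_mem h, Set.indicator_of_mem
            (show p ∈ Set.univ ×ˢ Set.Iic t from ⟨trivial, h⟩)]
        · simp [Function.uncurry, Set.indicator_of_notMem h, Set.indicator_of_notMem
            (show p ∉ Set.univ ×ˢ Set.Iic t from fun hp => h hp.2)]
      rw [this]
      exact ((continuous_f2 ρ).aestronglyMeasurable).indicator
        (MeasurableSet.univ.prod measurableSet_Iic)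
    · refine Filter.Eventually.of_forall fun p => ?_
      rw [Real.norm_eq_abs, Real.norm_eq_abs, abs_of_nonneg (f2_nonneg hρ p.1 p.2)]
      show |(Set.Iic t).indicator (f2 ρ p.1) p.2| ≤ f2 ρ p.1 p.2
      by_cases h : p.2 ∈ Set.Iic t
      · rw [Set.indicator_of_mem h, abs_of_nonneg (f2_nonneg hρ p.1 p.2)]
      · rw [Set.indicator_of_notMem h, abs_zero]
        exact f2_nonneg hρ p.1 p.2
  rw [integral_integral_swap hint]
  have h3 : ∀ y : ℝ, (∫ x : ℝ, (Set.Iic t).indicator (f2 ρ x) y) =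
      (Set.Iic t).indicator (fun y => ∫ x : ℝ, f2 ρ x y) y := by
    intro y
    by_cases h : y ∈ Set.Iic t
    · simp only [Set.indicator_of_mem h]
    · simp only [Set.indicator_of_notMem h, integral_zero]
  rw [integral_congr_ae (Filter.Eventually.of_forall h3), integral_indicator measurableSet_Iic]
  rw [setIntegral_congr_fun measurableSet_Iic (fun y _ => full_int hρ y)]
  rfl

lemma continuous_phi : Continuous phi := by unfold phi; fun_prop


lemma key_lemma {ρ : ℝ} (hρ : ρ ∈ Set.Ioo (0:ℝ) 1) (s t : ℝ) :
    stdNormalCDF s * stdNormalCDF t < biNormalCDF ρ s t := by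
  obtain ⟨hρ1, hρ2⟩ := hρ
  have hρ' : ρ ∈ Set.Ioo (0:ℝ) 1 := ⟨hρ1, hρ2⟩
  set σ := Real.sqrt (1 - ρ ^ 2) with hσdef
  have hσpos : 0 < σ := sigma_pos hρ'
  set g : ℝ → ℝ := fun x => stdNormalCDF ((t - ρ * x) / σ) with hgdef
  set G : ℝ := stdNormalCDF t with hGdef
  -- rewrite biNormalCDF
  have hbi : biNormalCDF ρ s t = ∫ x in Set.Iic s, phi x * g x := by
    have h0 : biNormalCDF ρ s t = ∫ x in Set.Iic s, ∫ y in Set.Iic t, f2 ρ x y := rfl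
    rw [h0]
    exact setIntegral_congr_fun measurableSet_Iic (fun x _ => inner_int hρ' x t)
  -- g is strictly antitone
  have hg_anti : StrictAnti g := by
    intro x x' hxx'
    apply stdNormalCDF_strictMono
    rw [div_lt_div_iff_of_pos_right hσpos]
    nlinarith
  have hg_meas : Measurable g := hg_anti.antitone.measurable
  have hg01 : ∀ x, 0 ≤ g x ∧ g x ≤ 1 := fun x => ⟨stdNormalCDF_nonneg _, stdNormalCDF_le_one _⟩
  have hG0 : 0 ≤ G := stdNormalCDF_nonneg t
  have hG1 : G ≤ 1 := stdNormalCDF_le_one t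
  -- the function h
  set h : ℝ → ℝ := fun x => phi x * (g x - G) with hhdef
  have hh_meas : AEStronglyMeasurable h volume :=
    (continuous_phi.measurable.mul (hg_meas.sub measurable_const)).aestronglyMeasurable
  have hh_bound : ∀ x, ‖h x‖ ≤ ‖phi x‖ := by
    intro x
    rw [Real.norm_eq_abs, Real.norm_eq_abs, abs_of_pos (phi_pos x), abs_mul,
      abs_of_pos (phi_pos x)]
    have : |g x - G| ≤ 1 := by
      rw [abs_le]; constructor
      · linarith [(hg01 x).1]
      · linarith [(hg01 x).2]
    nlinarith [phi_pos x]
  have hh_int : Integrable h :=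
    integrable_phi.mono hh_meas (Filter.Eventually.of_forall hh_bound)
  -- integral of h over ℝ is 0
  have hpg_meas : AEStronglyMeasurable (fun x => phi x * g x) volume :=
    (continuous_phi.measurable.mul hg_meas).aestronglyMeasurable
  have hpg_int : Integrable (fun x => phi x * g x) := by
    refine integrable_phi.mono hpg_meas (Filter.Eventually.of_forall fun x => ?_)
    rw [Real.norm_eq_abs, Real.norm_eq_abs, abs_of_pos (phi_pos x), abs_mul,
      abs_of_pos (phi_pos x), abs_of_nonneg (hg01 x).1]
    nlinarith [phi_pos x, (hg01 x).2]
  have hpG_int : Integrable (fun x => phi x * G) := integrable_phi.mul_const G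
  have hh_zero : ∫ x, h x = 0 := by
    have : ∫ x, h x = (∫ x, phi x * g x) - ∫ x, phi x * G := by
      rw [← integral_sub hpg_int hpG_int]
      congr 1 with x
      rw [hhdef]; ring
    rw [this, fubini_marg hρ' t, integral_mul_const, integral_phi, one_mul, ← hGdef, sub_self]
  -- reduce the goal
  have hsplit : ∫ x in Set.Iic s, phi x * g x =
      (∫ x in Set.Iic s, h x) + ∫ x in Set.Iic s, phi x * G := by
    rw [← integral_add hh_int.integrableOn hpG_int.integrableOn]
    congr 1 with x
    rw [hhdef]; ring
  have hconst : ∫ x in Set.Iic s, phi x * G = stdNormalCDF s * G := by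
    rw [integral_mul_const, ← stdNormalCDF_eq]
  rw [hbi, hsplit, hconst]
  have hpos : 0 < ∫ x in Set.Iic s, h x := by
    by_cases hgs : G ≤ g s
    · -- h ≥ 0 on Iic s, strictly positive on Iio s
      refine (setIntegral_pos_iff_support_of_nonneg_ae ?_ hh_int.integrableOn).2 ?_
      · refine (ae_restrict_iff' measurableSet_Iic).2 (Filter.Eventually.of_forall fun x hx => ?_)
        have : G ≤ g x := le_trans hgs (hg_anti.antitone hx)
        have := phi_pos x
        simp only [Pi.zero_apply, hhdef]
        nlinarith
      · refine lt_of_lt_of_le ?_ (measure_mono (show Set.Iio s ⊆ Function.support h ∩ Set.Iic s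
          from fun x hx => ⟨?_, mem_Iic.mpr (le_of_lt (mem_Iio.mp hx))⟩))
        · rw [Real.volume_Iio]; exact ENNReal.zero_lt_top
        · have h1 : g s < g x := hg_anti hx
          have h2 : 0 < g x - G := by linarith
          have := phi_pos x
          simp only [Function.mem_support, hhdef]
          positivity
    · push_neg at hgs
      have hzero := intervalIntegral.integral_Iic_add_Ioi (b := s) hh_int.integrableOn hh_int.integrableOn
      rw [hh_zero] at hzero
      have hneg : 0 < ∫ x in Set.Ioi s, -h x := by
        refine (setIntegral_pos_iff_support_of_nonneg_ae ?_ hh_int.neg.integrableOn).2 ?_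
        · refine (ae_restrict_iff' measurableSet_Ioi).2
            (Filter.Eventually.of_forall fun x hx => ?_)
          have h1 : g x < g s := hg_anti hx
          have := phi_pos x
          simp only [Pi.zero_apply, hhdef, Pi.neg_apply]
          nlinarith
        · refine lt_of_lt_of_le ?_ (measure_mono (show Set.Ioi s ⊆
            Function.support (fun x => -h x) ∩ Set.Ioi s from fun x hx => ⟨?_, hx⟩))
          · rw [Real.volume_Ioi]; exact ENNReal.zero_lt_top
          · have h1 : g x < g s := hg_anti hx
            have h2 : 0 < G - g x := by linarith
            have := phi_pos x
            simp only [Function.mem_support, hhdef]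
            have h3 : -(phi x * (g x - G)) = phi x * (G - g x) := by ring
            rw [h3]
            positivity
      rw [integral_neg] at hneg
      linarith
  nlinarith [mul_le_mul_of_nonneg_right (stdNormalCDF_le_one s) hG0, hpos]

theorem stmt11 (ρ : ℝ) (hρ : ρ ∈ Set.Ioo (0 : ℝ) 1) (Φinv : ℝ → ℝ)
    (hinv₁ : ∀ p ∈ Set.Ioo (0 : ℝ) 1, stdNormalCDF (Φinv p) = p)
    (hinv₂ : ∀ w : ℝ, Φinv (stdNormalCDF w) = w)
    (u v : ℝ) (hu : u ∈ Set.Ioo (0 : ℝ) 1) (hv : v ∈ Set.Ioo (0 : ℝ) 1) :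
    u * v < biNormalCDF ρ (Φinv u) (Φinv v) := by
  have h1 : stdNormalCDF (Φinv u) = u := hinv₁ u hu
  have h2 : stdNormalCDF (Φinv v) = v := hinv₁ v hv
  have h3 := key_lemma hρ (Φinv u) (Φinv v)
  rwa [h1, h2] at h3
end

section
/- Fix ρ ∈ (0,1) and set β = arcsin(ρ). Under the change of variables w = Φ^{-1}(x), z = (Φ^{-1}(u²/x) − ρΦ^{-1}(x))/√(1−ρ²), the equation x·Φ((Φ^{-1}(u²/x) − ρΦ^{-1}(x))/√(1−ρ²)) = (u²/x)·Φ((Φ^{-1}(x) − ρΦ^{-1}(u²/x))/√(1−ρ²)) is equivalent to Φ(w)Φ(z) = Φ(w·cos β − z·sin β)·Φ(w·sin β + z·cos β). -/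
theorem stmt14 (ρ : ℝ) (hρ : ρ ∈ Set.Ioo (0 : ℝ) 1) (Φinv : ℝ → ℝ)
    (hinv₁ : ∀ p ∈ Set.Ioo (0 : ℝ) 1, stdNormalCDF (Φinv p) = p)
    (hinv₂ : ∀ w : ℝ, Φinv (stdNormalCDF w) = w)
    (u x : ℝ) (hu : u ∈ Set.Ioo (0 : ℝ) 1) (hx : x ∈ Set.Ioo (u ^ 2) 1)
    (β w z : ℝ) (hβ : β = Real.arcsin ρ) (hw : w = Φinv x)
    (hz : z = (Φinv (u ^ 2 / x) - ρ * Φinv x) / Real.sqrt (1 - ρ ^ 2)) :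
    (x * stdNormalCDF ((Φinv (u ^ 2 / x) - ρ * Φinv x) / Real.sqrt (1 - ρ ^ 2))
        = (u ^ 2 / x) *
          stdNormalCDF ((Φinv x - ρ * Φinv (u ^ 2 / x)) / Real.sqrt (1 - ρ ^ 2)))
      ↔ stdNormalCDF w * stdNormalCDF z
          = stdNormalCDF (w * Real.cos β - z * Real.sin β) *
            stdNormalCDF (w * Real.sin β + z * Real.cos β) := by
  obtain ⟨hρ0, hρ1⟩ := hρ
  obtain ⟨hu0, hu1⟩ := hu
  obtain ⟨hx0, hx1⟩ := hx
  have hxpos : 0 < x := lt_trans (by positivity) hx0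
  have hu2pos : 0 < u ^ 2 / x := by positivity
  have hu2lt : u ^ 2 / x < 1 := (div_lt_one hxpos).2 hx0
  have hxmem : x ∈ Set.Ioo (0 : ℝ) 1 := ⟨hxpos, hx1⟩
  have hsin : Real.sin β = ρ := by
    rw [hβ]; exact Real.sin_arcsin (by linarith) (by linarith)
  have hcos : Real.cos β = Real.sqrt (1 - ρ ^ 2) := by
    rw [hβ, Real.cos_arcsin]
  have hs2 : Real.sqrt (1 - ρ ^ 2) ^ 2 = 1 - ρ ^ 2 := by
    rw [Real.sq_sqrt]; nlinarith
  have hspos : 0 < Real.sqrt (1 - ρ ^ 2) := Real.sqrt_pos.2 (by nlinarith)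
  set a := Φinv x with ha
  set b := Φinv (u ^ 2 / x) with hb
  have hxa : stdNormalCDF a = x := hinv₁ x hxmem
  have hub : stdNormalCDF b = u ^ 2 / x := hinv₁ _ ⟨hu2pos, hu2lt⟩
  have hzs : z * Real.sqrt (1 - ρ ^ 2) = b - ρ * a := by
    rw [hz]; field_simp
  have hb' : b = w * Real.sin β + z * Real.cos β := by
    rw [hsin, hcos, hw]; nlinarith [hzs]
  have he1 : (a - ρ * b) / Real.sqrt (1 - ρ ^ 2)
      = w * Real.cos β - z * Real.sin β := by
    rw [hsin, hcos, hw]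
    rw [div_eq_iff (ne_of_gt hspos)]
    linear_combination (-a) * hs2 + ρ * hzs
  rw [← hz, he1, ← hub, hb', ← hxa, ← hw]
  constructor <;> intro h <;> linarith [h, mul_comm (stdNormalCDF (w * Real.cos β - z * Real.sin β)) (stdNormalCDF (w * Real.sin β + z * Real.cos β))]
end
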